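/- Let Λ be a metric space, K ⊆ Λ compact, X a Fréchet space, and (T(λ))_{λ∈Λ} a continuous family of continuous linear operators on X. Fix a non-empty open set V ⊆ X, δ > 0, and M ∈ ℕ. Then the set E := { x ∈ X : for all λ ∈ K there exists n ≥ M with #{0 ≤ m ≤ n : T(λ)^m(x) ∈ V}/(n+1) > δ } is open in X. -/

import Mathlib

/-!
Banach–Steinhaus on the Fréchet space `X` makes the compact family `(T λ)_{λ ∈ K}`
equicontinuous, so every `(λ, x) ↦ (T λ)^[m] x` is jointly continuous on `K × X`. Visits to the
open set `V` persist under perturbation, so each visit proportion is lower semicontinuous there,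
and the tube lemma over the compact factor `K` finishes the argument.
-/

open Filter Finset
open scoped Classical

noncomputable def visitProp {X : Type*} (S : X → X) (x : X) (V : Set X) (n : ℕ) : ℝ :=
  (((Finset.range (n + 1)).filter (fun m => S^[m] x ∈ V)).card : ℝ) / (n + 1)

open Topology Uniformity

theorem Equicontinuous.continuous_uncurry {ι X α : Type*} [TopologicalSpace ι]
    [TopologicalSpace X] [UniformSpace α] {F : ι → X → α} (hF : Equicontinuous F)
    (hC : ∀ x, Continuous fun i => F i x) : Continuous (Function.uncurry F) := by
  rw [continuous_iff_continuousAt]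
  rintro ⟨i₀, x₀⟩
  rw [ContinuousAt, Uniform.tendsto_nhds_right]
  intro U hU
  obtain ⟨W, hW, hWU⟩ := comp_mem_uniformity_sets hU
  have near_x₀ : ∀ᶠ x in 𝓝 x₀, ∀ i, (F i x₀, F i x) ∈ W := hF x₀ W hW
  have near_i₀ : ∀ᶠ i in 𝓝 i₀, (F i₀ x₀, F i x₀) ∈ W :=
    (Uniform.tendsto_nhds_right.mp ((hC x₀).tendsto i₀)).eventually_mem hW
  rw [nhds_prod_eq, Filter.mem_map]
  filter_upwards [near_i₀.prod_mk near_x₀] with p hp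
  exact hWU (SetRel.prodMk_mem_comp hp.1 (hp.2 p.1))

theorem IsCompact.equicontinuous_of_continuous_apply {P 𝕜 E F : Type*} [TopologicalSpace P]
    [NontriviallyNormedField 𝕜] [AddCommGroup E] [Module 𝕜 E] [UniformSpace E]
    [IsUniformAddGroup E] [ContinuousSMul 𝕜 E] [BarrelledSpace 𝕜 E] [AddCommGroup F]
    [Module 𝕜 F] [UniformSpace F] [IsUniformAddGroup F] [ContinuousSMul 𝕜 F]
    [PolynormableSpace 𝕜 F] {K : Set P} (hK : IsCompact K) {T : P → E →L[𝕜] F}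
    (hT : ∀ x, Continuous fun p => T p x) : Equicontinuous fun p : K => ⇑(T p) := by
  refine (PolynormableSpace.banach_steinhaus fun x => ?_).equicontinuous
  refine (hK.image (hT x)).isVonNBounded 𝕜 |>.subset ?_
  rintro _ ⟨p, rfl⟩
  exact ⟨p, p.2, rfl⟩

theorem Continuous.iterate_uncurry {P X : Type*} [TopologicalSpace P] [TopologicalSpace X]
    {S : P → X → X} (hS : Continuous (Function.uncurry S)) (m : ℕ) :
    Continuous fun q : P × X => (S q.1)^[m] q.2 := by
  induction m with
  | zero => exact continuous_snd
  | succ m ih =>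
    simp only [Function.iterate_succ_apply']
    exact hS.comp (continuous_fst.prodMk ih)

theorem visitProp_le_visitProp {X : Type*} {S S' : X → X} {x y : X} {V : Set X} {n : ℕ}
    (h : ∀ m ≤ n, S^[m] x ∈ V → S'^[m] y ∈ V) :
    visitProp S x V n ≤ visitProp S' y V n := by
  unfold visitProp
  gcongr with m hm
  exact h m (Finset.mem_range_succ_iff.mp hm)

theorem lowerSemicontinuous_visitProp {P X : Type*} [TopologicalSpace P] [TopologicalSpace X]
    {S : P → X → X} {x : P → X} (hS : ∀ m, Continuous fun p => (S p)^[m] (x p))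
    {V : Set X} (hV : IsOpen V) (n : ℕ) :
    LowerSemicontinuous fun p => visitProp (S p) (x p) V n := by
  intro p₀ r hr
  have visits_persist : ∀ᶠ p in 𝓝 p₀, ∀ m ∈ Finset.range (n + 1),
      (S p₀)^[m] (x p₀) ∈ V → (S p)^[m] (x p) ∈ V :=
    (Filter.eventually_all_finset _).mpr fun m _ => by
      by_cases hm : (S p₀)^[m] (x p₀) ∈ V
      · filter_upwards [(hS m).continuousAt.eventually_mem (hV.mem_nhds hm)] with p hp
        exact fun _ => hp
      · exact Eventually.of_forall fun _ h => absurd h hm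
  filter_upwards [visits_persist] with p hp
  exact hr.trans_le <| visitProp_le_visitProp fun m hm =>
    hp m (Finset.mem_range_succ_iff.mpr hm)

theorem isOpen_setOf_forall_mem_of_compactSpace {P X : Type*} [TopologicalSpace P]
    [CompactSpace P] [TopologicalSpace X] {G : Set (P × X)} (hG : IsOpen G) :
    IsOpen {x | ∀ p, (p, x) ∈ G} := by
  have eq_compl_image : {x | ∀ p, (p, x) ∈ G} = (Prod.snd '' Gᶜ)ᶜ := by
    ext x
    simp
  rw [eq_compl_image]
  exact (isClosedMap_snd_of_compactSpace _ hG.isClosed_compl).isOpen_compl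

theorem stmt6_general {Λ : Type*} [MetricSpace Λ] (K : Set Λ) (hK : IsCompact K)
    {X : Type*} [AddCommGroup X] [Module ℝ X] [UniformSpace X] [IsUniformAddGroup X]
    [CompleteSpace X] [ContinuousSMul ℝ X] [LocallyConvexSpace ℝ X]
    [TopologicalSpace.MetrizableSpace X]
    (T : Λ → X →L[ℝ] X) (hT : ∀ x : X, Continuous fun lam => T lam x)
    (V : Set X) (hV : IsOpen V) (δ : ℝ) (M : ℕ) :
    IsOpen {x : X | ∀ lam ∈ K, ∃ n ≥ M, δ < visitProp (T lam) x V n} := by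
  -- with completeness this makes `X` a Baire space, hence barrelled
  have : (𝓤 X).IsCountablyGenerated := IsUniformAddGroup.uniformity_countably_generated
  have : CompactSpace K := isCompact_iff_compactSpace.mp hK
  have hjoint : Continuous (Function.uncurry fun p : K => ⇑(T p)) :=
    (hK.equicontinuous_of_continuous_apply hT).continuous_uncurry
      fun x => (hT x).comp continuous_subtype_val
  have hgood : IsOpen (⋃ n ≥ M, (fun q : K × X => visitProp (T q.1) q.2 V n) ⁻¹' Set.Ioi δ) :=
    isOpen_biUnion fun n _ =>
      (lowerSemicontinuous_visitProp (S := fun q : K × X => T q.1) (x := Prod.snd)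
        hjoint.iterate_uncurry hV n).isOpen_preimage δ
  simpa only [Subtype.forall, Set.mem_iUnion, Set.mem_preimage, Set.mem_Ioi, exists_prop] using
    isOpen_setOf_forall_mem_of_compactSpace hgood

theorem stmt6 {Λ : Type*} [MetricSpace Λ] (K : Set Λ) (hK : IsCompact K)
    {X : Type*} [AddCommGroup X] [Module ℝ X] [UniformSpace X] [IsUniformAddGroup X]
    [CompleteSpace X] [ContinuousSMul ℝ X] [LocallyConvexSpace ℝ X]
    [TopologicalSpace.MetrizableSpace X]
    (T : Λ → X →L[ℝ] X) (hT : ∀ x : X, Continuous fun lam => T lam x)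
    (V : Set X) (hV : IsOpen V) (hVne : V.Nonempty) (δ : ℝ) (hδ : 0 < δ) (M : ℕ) :
    IsOpen {x : X | ∀ lam ∈ K, ∃ n ≥ M, δ < visitProp (T lam) x V n} :=
  stmt6_general K hK T hT V hV δ M
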